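/- Let A be a real symmetric d×d matrix, λ ≥ 0, m ≤ d, and W₀ ∈ ℝ^{d×m}. Then the ordinary differential equation Ẇ(t) = 2(A − W(t)W(t)ᵀ)W(t) − 2λ W(t), W(0) = W₀, has a unique solution defined for all t ≥ 0, and the trajectory is bounded: sup_{t ≥ 0} ‖W(t)‖_F < ∞. -/

import Mathlib

/-!
The squared Frobenius norm `q = ‖W‖²` is a Lyapunov function at infinity:
`m · dq/dt ≤ 4 q (m ‖A‖_F - q)`, since `tr(Wᵀ A W) ≤ ‖A‖_F q` and, by Cauchy–Schwarz against the
identity, `q² = tr(WᵀW)² ≤ m ‖WᵀW‖_F² = m tr(Wᵀ W Wᵀ W)`. So the vector field points strictly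
inwards on every sphere of radius larger than `√(m ‖A‖_F)`, which traps the solution in a ball
and rules out blow-up. Uniqueness holds because the field is polynomial, hence locally Lipschitz.
-/

open Matrix Set

/-- Frobenius norm of a real matrix. -/
noncomputable def frobNorm {n m : ℕ} (M : Matrix (Fin n) (Fin m) ℝ) : ℝ :=
  Real.sqrt (∑ i, ∑ j, (M i j) ^ 2)

open Metric
open scoped NNReal RealInnerProductSpace

section RadialRetraction

variable {E : Type*} [NormedAddCommGroup E] [NormedSpace ℝ E] {r : ℝ}

noncomputable def radialRetraction (r : ℝ) (x : E) : E := (r / max ‖x‖ r) • x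

lemma radialRetraction_of_norm_le (hr : 0 < r) {x : E} (hx : ‖x‖ ≤ r) :
    radialRetraction r x = x := by
  rw [radialRetraction, max_eq_right hx, div_self hr.ne', one_smul]

lemma norm_radialRetraction_le (hr : 0 < r) (x : E) : ‖radialRetraction r x‖ ≤ r := by
  have hM : 0 < max ‖x‖ r := hr.trans_le (le_max_right _ _)
  rw [radialRetraction, norm_smul, Real.norm_of_nonneg (by positivity), div_mul_eq_mul_div,
    div_le_iff₀ hM]
  exact mul_le_mul_of_nonneg_left (le_max_left _ _) hr.le

/-- With `M x = max ‖x‖ r`, the difference of the images is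
`(r / M x) • (x - y) + (r / M x - r / M y) • y`, and both terms are at most `‖x - y‖`. -/
lemma lipschitzWith_radialRetraction (hr : 0 < r) :
    LipschitzWith 2 (radialRetraction (E := E) r) := by
  refine LipschitzWith.of_dist_le_mul fun x y => ?_
  simp only [radialRetraction, dist_eq_norm]
  set Mx := max ‖x‖ r
  set My := max ‖y‖ r
  have hMx : r ≤ Mx := le_max_right _ _
  have hMy : ‖y‖ ≤ My := le_max_left _ _
  have hMx0 : 0 < Mx := hr.trans_le hMx
  have hMy0 : 0 < My := hr.trans_le (le_max_right _ _)
  have hM : |My - Mx| ≤ ‖x - y‖ := by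
    rw [norm_sub_rev]
    exact (abs_max_sub_max_le_abs _ _ r).trans (abs_norm_sub_norm_le y x)
  have h₁ : ‖(r / Mx) • (x - y)‖ ≤ ‖x - y‖ := by
    rw [norm_smul, Real.norm_of_nonneg (by positivity)]
    exact mul_le_of_le_one_left (norm_nonneg _) ((div_le_one hMx0).2 hMx)
  have h₂ : ‖(r / Mx - r / My) • y‖ ≤ ‖x - y‖ := by
    have : r / Mx - r / My = r / Mx * ((My - Mx) / My) := by field_simp
    rw [norm_smul, this, Real.norm_eq_abs, abs_mul, abs_of_pos (by positivity : 0 < r / Mx),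
      abs_div, abs_of_pos hMy0]
    calc r / Mx * (|My - Mx| / My) * ‖y‖
        = r / Mx * (‖y‖ / My) * |My - Mx| := by ring
      _ ≤ 1 * 1 * ‖x - y‖ := by
        gcongr
        · exact (div_le_one hMx0).2 hMx
        · exact (div_le_one hMy0).2 hMy
      _ = ‖x - y‖ := by ring
  have hsplit : (r / Mx) • x - (r / My) • y = (r / Mx) • (x - y) + (r / Mx - r / My) • y := by
    rw [smul_sub, sub_smul]; abel
  rw [hsplit]
  push_cast
  linarith [norm_add_le ((r / Mx) • (x - y)) ((r / Mx - r / My) • y)]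

end RadialRetraction

lemma hasDerivWithinAt_euclidean_iff {ι : Type*} [Fintype ι] {γ : ℝ → EuclideanSpace ℝ ι}
    {γ' : EuclideanSpace ℝ ι} {s : Set ℝ} {t : ℝ} :
    HasDerivWithinAt γ γ' s t ↔ ∀ i, HasDerivWithinAt (fun u => γ u i) (γ' i) s t := by
  simp only [hasDerivWithinAt_iff_hasFDerivWithinAt, hasFDerivWithinAt_euclidean]
  rfl

section ODE

variable {E : Type*} [NormedAddCommGroup E] [NormedSpace ℝ E]

lemma HasDerivWithinAt.Ici_of_Icc {f : ℝ → E} {f' : E} {a b t : ℝ}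
    (h : HasDerivWithinAt f f' (Icc a b) t) (ht : t ∈ Ico a b) :
    HasDerivWithinAt f f' (Ici t) t :=
  h.mono_of_mem_nhdsWithin <|
    Filter.mem_of_superset (Icc_mem_nhdsGE ht.2) (Icc_subset_Icc_left ht.1)

theorem eqOn_Ici_of_hasDerivWithinAt [ProperSpace E] {F : E → E} (hF : LocallyLipschitz F)
    {γ δ : ℝ → E} (hγ : ∀ t ∈ Ici 0, HasDerivWithinAt γ (F (γ t)) (Ici 0) t)
    (hδ : ∀ t ∈ Ici 0, HasDerivWithinAt δ (F (δ t)) (Ici 0) t) (h0 : γ 0 = δ 0) :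
    EqOn γ δ (Ici 0) := by
  intro t ht
  have hγc : ContinuousOn γ (Icc 0 t) := fun s hs =>
    (hγ s hs.1).continuousWithinAt.mono Icc_subset_Ici_self
  have hδc : ContinuousOn δ (Icc 0 t) := fun s hs =>
    (hδ s hs.1).continuousWithinAt.mono Icc_subset_Ici_self
  obtain ⟨ρ, hρ⟩ := ((isCompact_Icc.image_of_continuousOn hγc).union
    (isCompact_Icc.image_of_continuousOn hδc)).isBounded.subset_closedBall 0
  obtain ⟨K, hK⟩ := hF.locallyLipschitzOn.exists_lipschitzOnWith_of_compact
    (isCompact_closedBall (0 : E) ρ)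
  exact ODE_solution_unique_of_mem_Icc_right (v := fun _ => F) (s := fun _ => closedBall 0 ρ)
    (fun _ _ => hK) hγc (fun s hs => (hγ s hs.1).mono (Ici_subset_Ici.2 hs.1))
    (fun s hs => hρ (Or.inl (mem_image_of_mem γ (Ico_subset_Icc_self hs)))) hδc
    (fun s hs => (hδ s hs.1).mono (Ici_subset_Ici.2 hs.1))
    (fun s hs => hρ (Or.inr (mem_image_of_mem δ (Ico_subset_Icc_self hs)))) h0 ⟨ht, le_rfl⟩

variable [CompleteSpace E] {G : E → E} {K : ℝ≥0} {C : ℝ}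

theorem exists_hasDerivWithinAt_Icc_of_lipschitzWith (hG : LipschitzWith K G)
    (hC : ∀ x, ‖G x‖ ≤ C) (x₀ : E) {T : ℝ} (hT : 0 ≤ T) :
    ∃ α : ℝ → E, α 0 = x₀ ∧ ∀ t ∈ Icc 0 T, HasDerivWithinAt α (G (α t)) (Icc 0 T) t := by
  have hPL : IsPicardLindelof (fun _ => G) (⟨0, le_rfl, hT⟩ : Icc 0 T) x₀
      (C.toNNReal * T.toNNReal) 0 C.toNNReal K :=
    { lipschitzOnWith := fun _ _ => hG.lipschitzOnWith
      continuousOn := fun _ _ => continuousOn_const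
      norm_le := fun _ _ x _ => (hC x).trans (Real.le_coe_toNNReal C)
      mul_max_le := by simp [max_eq_left hT] }
  exact hPL.exists_eq_forall_mem_Icc_hasDerivWithinAt₀

/-- Solutions on the intervals `[0, n]` agree on their common domain by uniqueness, so they glue
to a solution on `[0, ∞)`. -/
theorem exists_hasDerivWithinAt_Ici_of_lipschitzWith (hG : LipschitzWith K G)
    (hC : ∀ x, ‖G x‖ ≤ C) (x₀ : E) :
    ∃ γ : ℝ → E, γ 0 = x₀ ∧ ∀ t ∈ Ici 0, HasDerivWithinAt γ (G (γ t)) (Ici 0) t := by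
  choose α hα0 hα using fun n : ℕ =>
    exists_hasDerivWithinAt_Icc_of_lipschitzWith hG hC x₀ n.cast_nonneg
  have hagree (n k : ℕ) : EqOn (α n) (α k) (Icc 0 (min n k : ℝ)) := by
    have hn : Icc 0 (min n k : ℝ) ⊆ Icc 0 (n : ℝ) := Icc_subset_Icc_right (min_le_left _ _)
    have hk : Icc 0 (min n k : ℝ) ⊆ Icc 0 (k : ℝ) := Icc_subset_Icc_right (min_le_right _ _)
    refine ODE_solution_unique (v := fun _ => G) (fun _ => hG)
      (fun t ht => (hα n t (hn ht)).continuousWithinAt.mono hn)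
      (fun t ht => (hα n t (hn (Ico_subset_Icc_self ht))).Ici_of_Icc
        ⟨ht.1, ht.2.trans_le (min_le_left _ _)⟩)
      (fun t ht => (hα k t (hk ht)).continuousWithinAt.mono hk)
      (fun t ht => (hα k t (hk (Ico_subset_Icc_self ht))).Ici_of_Icc
        ⟨ht.1, ht.2.trans_le (min_le_right _ _)⟩)
      ((hα0 n).trans (hα0 k).symm)
  refine ⟨fun t => α (⌈t⌉₊ + 1) t, by simpa using hα0 1, fun t ht => ?_⟩
  set N := ⌈t⌉₊ + 1
  have htN : t < N := by push_cast [N]; linarith [Nat.le_ceil t]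
  have hγ : EqOn (fun s => α (⌈s⌉₊ + 1) s) (α N) (Icc 0 N) := fun s hs =>
    hagree _ N ⟨hs.1, le_min (by push_cast; linarith [Nat.le_ceil s]) hs.2⟩
  have hmem : Icc 0 (N : ℝ) ∈ nhdsWithin t (Ici 0) :=
    mem_nhdsWithin.2 ⟨Iio N, isOpen_Iio, htN, fun s hs => ⟨hs.2, hs.1.le⟩⟩
  exact ((hα N t ⟨ht, htN.le⟩).mono_of_mem_nhdsWithin hmem).congr_of_eventuallyEq
    (Filter.eventuallyEq_of_mem hmem hγ) (hγ ⟨ht, htN.le⟩)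


end ODE

section Dissipative

variable {E : Type*} [NormedAddCommGroup E] [InnerProductSpace ℝ E] {F : E → E}

theorem norm_le_of_hasDerivWithinAt_of_inner_neg {γ : ℝ → E}
    (hγ : ∀ t ∈ Ici 0, HasDerivWithinAt γ (F (γ t)) (Ici 0) t) {r : ℝ}
    (hF : ∀ x, ‖x‖ = r → ⟪x, F x⟫ < 0) (h0 : ‖γ 0‖ ≤ r) :
    ∀ t ∈ Ici 0, ‖γ t‖ ≤ r := by
  intro t ht
  have hr : 0 ≤ r := (norm_nonneg _).trans h0
  have hsq : ‖γ t‖ ^ 2 ≤ r ^ 2 := by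
    refine image_le_of_deriv_right_lt_deriv_boundary (f := fun s => ‖γ s‖ ^ 2) (B' := fun _ => 0)
      (fun s hs => ((hγ s hs.1).continuousWithinAt.mono Icc_subset_Ici_self).norm.pow 2)
      (fun s hs => ((hγ s hs.1).mono (Ici_subset_Ici.2 hs.1)).norm_sq)
      (by gcongr) (fun _ => hasDerivAt_const _ _) (fun s _ hs => ?_) ⟨ht, le_rfl⟩
    have : ‖γ s‖ = r := by simpa [sq_eq_sq₀ (norm_nonneg _) hr] using hs
    linarith [hF _ this]
  exact (pow_le_pow_iff_left₀ (norm_nonneg _) hr two_ne_zero).1 hsq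

variable [ProperSpace E]

/-- The field is cut off outside a ball of radius `r > max ‖x₀‖ R` by composing with the radial
retraction; the cut-off field is bounded and Lipschitz, so it has a global solution, and the
sign condition on the sphere of radius `r` keeps that solution inside the ball, where the two
fields agree. -/
theorem exists_hasDerivWithinAt_Ici_norm_le_of_inner_neg (hF : LocallyLipschitz F) {R : ℝ}
    (hFR : ∀ x, R < ‖x‖ → ⟪x, F x⟫ < 0) (x₀ : E) :
    ∃ γ : ℝ → E, γ 0 = x₀ ∧ (∀ t ∈ Ici 0, HasDerivWithinAt γ (F (γ t)) (Ici 0) t) ∧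
      ∀ t ∈ Ici 0, ‖γ t‖ ≤ max ‖x₀‖ R + 1 := by
  set r := max ‖x₀‖ R + 1
  have hr : 0 < r := by positivity
  obtain ⟨K, hK⟩ := hF.locallyLipschitzOn.exists_lipschitzOnWith_of_compact
    (isCompact_closedBall (0 : E) r)
  obtain ⟨C, hC⟩ := (isCompact_closedBall (0 : E) r).exists_bound_of_continuousOn
    hF.continuous.continuousOn
  have hmaps : MapsTo (radialRetraction r) univ (closedBall (0 : E) r) :=
    fun x _ => mem_closedBall_zero_iff.2 (norm_radialRetraction_le hr x)
  have hG : LipschitzWith (K * 2) (F ∘ radialRetraction r) := by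
    simpa using hK.comp (lipschitzWith_radialRetraction hr).lipschitzOnWith hmaps
  obtain ⟨γ, hγ0, hγ⟩ := exists_hasDerivWithinAt_Ici_of_lipschitzWith hG
    (fun x => hC _ (hmaps (mem_univ x))) x₀
  have hbound : ∀ t ∈ Ici 0, ‖γ t‖ ≤ r := by
    refine norm_le_of_hasDerivWithinAt_of_inner_neg hγ (fun x hx => ?_) ?_
    · rw [Function.comp_apply, radialRetraction_of_norm_le hr hx.le]
      exact hFR x (by rw [hx]; linarith [le_max_right ‖x₀‖ R])
    · rw [hγ0]; linarith [le_max_left ‖x₀‖ R]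
  refine ⟨γ, hγ0, fun t ht => ?_, hbound⟩
  simpa [radialRetraction_of_norm_le hr (hbound t ht)] using hγ t ht

end Dissipative

section MatrixFlatten

variable {n k m : ℕ}

def flatten (W : Matrix (Fin n) (Fin m) ℝ) : EuclideanSpace ℝ (Fin n × Fin m) :=
  WithLp.toLp 2 fun p => W p.1 p.2

def unflatten (x : EuclideanSpace ℝ (Fin n × Fin m)) : Matrix (Fin n) (Fin m) ℝ :=
  Matrix.of fun i j => x (i, j)

lemma inner_flatten (V W : Matrix (Fin n) (Fin m) ℝ) :
    ⟪flatten V, flatten W⟫ = trace (Vᵀ * W) := by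
  simp only [PiLp.inner_apply, Fintype.sum_prod_type, trace, diag, mul_apply, transpose_apply,
    flatten]
  rw [Finset.sum_comm]
  simp [mul_comm]

lemma norm_flatten (W : Matrix (Fin n) (Fin m) ℝ) : ‖flatten W‖ = frobNorm W := by
  simp [EuclideanSpace.norm_eq, frobNorm, flatten, Fintype.sum_prod_type]

lemma frobNorm_sq (W : Matrix (Fin n) (Fin m) ℝ) : frobNorm W ^ 2 = trace (Wᵀ * W) := by
  rw [← norm_flatten, ← real_inner_self_eq_norm_sq, inner_flatten]

lemma abs_trace_transpose_mul_le (V W : Matrix (Fin n) (Fin m) ℝ) :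
    |trace (Vᵀ * W)| ≤ frobNorm V * frobNorm W := by
  simpa [inner_flatten, norm_flatten] using abs_real_inner_le_norm (flatten V) (flatten W)

lemma frobNorm_mul_le (A : Matrix (Fin n) (Fin k) ℝ) (B : Matrix (Fin k) (Fin m) ℝ) :
    frobNorm (A * B) ≤ frobNorm A * frobNorm B := by
  let := @Matrix.frobeniusSeminormedAddCommGroup
  have h {p q : ℕ} (M : Matrix (Fin p) (Fin q) ℝ) : frobNorm M = ‖M‖ := by
    simp [frobNorm, frobenius_norm_def, Real.sqrt_eq_rpow]
  simpa only [h] using frobenius_norm_mul A B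

lemma hasDerivWithinAt_flatten_iff {V : ℝ → Matrix (Fin n) (Fin m) ℝ}
    {V' : Matrix (Fin n) (Fin m) ℝ} {s : Set ℝ} {t : ℝ} :
    HasDerivWithinAt (fun u => flatten (V u)) (flatten V') s t ↔
      ∀ i j, HasDerivWithinAt (fun u => V u i j) (V' i j) s t :=
  hasDerivWithinAt_euclidean_iff.trans Prod.forall

lemma trace_transpose_mul_mul_le (A : Matrix (Fin n) (Fin n) ℝ) (W : Matrix (Fin n) (Fin m) ℝ) :
    trace (Wᵀ * (A * W)) ≤ frobNorm A * trace (Wᵀ * W) :=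
  calc trace (Wᵀ * (A * W)) ≤ frobNorm W * frobNorm (A * W) :=
        (le_abs_self _).trans (abs_trace_transpose_mul_le W (A * W))
    _ ≤ frobNorm W * (frobNorm A * frobNorm W) :=
        mul_le_mul_of_nonneg_left (frobNorm_mul_le A W) (Real.sqrt_nonneg _)
    _ = frobNorm A * trace (Wᵀ * W) := by rw [← frobNorm_sq]; ring

lemma sq_trace_le (S : Matrix (Fin m) (Fin m) ℝ) : trace S ^ 2 ≤ m * trace (Sᵀ * S) := by
  have h := abs_trace_transpose_mul_le 1 S
  rw [transpose_one, one_mul] at h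
  calc trace S ^ 2 ≤ (frobNorm (1 : Matrix (Fin m) (Fin m) ℝ) * frobNorm S) ^ 2 :=
        sq_le_sq' (abs_le.1 h).1 (abs_le.1 h).2
    _ = m * trace (Sᵀ * S) := by
        rw [mul_pow, frobNorm_sq, frobNorm_sq, transpose_one, one_mul, trace_one, Fintype.card_fin]

end MatrixFlatten

section Oja

variable {d m : ℕ}

def ojaField (A : Matrix (Fin d) (Fin d) ℝ) (l : ℝ) (W : Matrix (Fin d) (Fin m) ℝ) :
    Matrix (Fin d) (Fin m) ℝ :=
  (2:ℝ) • ((A - W * Wᵀ) * W) - (2 * l) • W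

lemma trace_transpose_mul_ojaField (A : Matrix (Fin d) (Fin d) ℝ) (l : ℝ)
    (W : Matrix (Fin d) (Fin m) ℝ) :
    trace (Wᵀ * ojaField A l W) =
      2 * trace (Wᵀ * (A * W)) - 2 * trace ((Wᵀ * W)ᵀ * (Wᵀ * W)) - 2 * l * trace (Wᵀ * W) := by
  simp only [ojaField, Matrix.mul_sub, Matrix.sub_mul, Matrix.mul_smul, trace_sub, trace_smul,
    smul_eq_mul, transpose_mul, transpose_transpose, Matrix.mul_assoc]
  ring

lemma mul_trace_transpose_mul_ojaField_le (A : Matrix (Fin d) (Fin d) ℝ) {l : ℝ} (hl : 0 ≤ l)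
    (W : Matrix (Fin d) (Fin m) ℝ) :
    m * trace (Wᵀ * ojaField A l W) ≤ 2 * trace (Wᵀ * W) * (m * frobNorm A - trace (Wᵀ * W)) := by
  have hq : 0 ≤ trace (Wᵀ * W) := frobNorm_sq W ▸ sq_nonneg _
  have hA := trace_transpose_mul_mul_le A W
  have hS := sq_trace_le (Wᵀ * W)
  rw [trace_transpose_mul_ojaField]
  nlinarith [mul_le_mul_of_nonneg_left hA (Nat.cast_nonneg m : (0:ℝ) ≤ m),
    mul_nonneg (mul_nonneg (Nat.cast_nonneg m : (0:ℝ) ≤ m) hl) hq]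

def ojaVectorField (A : Matrix (Fin d) (Fin d) ℝ) (l : ℝ)
    (x : EuclideanSpace ℝ (Fin d × Fin m)) : EuclideanSpace ℝ (Fin d × Fin m) :=
  flatten (ojaField A l (unflatten x))

lemma inner_ojaVectorField_neg (A : Matrix (Fin d) (Fin d) ℝ) {l : ℝ} (hl : 0 ≤ l)
    {x : EuclideanSpace ℝ (Fin d × Fin m)} (hx : √(m * frobNorm A) < ‖x‖) :
    ⟪x, ojaVectorField A l x⟫ < 0 := by
  set W := unflatten x
  have hinner : ⟪x, ojaVectorField A l x⟫ = trace (Wᵀ * ojaField A l W) := inner_flatten W _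
  have hnorm : ‖x‖ ^ 2 = trace (Wᵀ * W) := by
    rw [← real_inner_self_eq_norm_sq]; exact inner_flatten W W
  have hA : (m : ℝ) * frobNorm A < trace (Wᵀ * W) := hnorm ▸ Real.lt_sq_of_sqrt_lt hx
  have hmA : 0 ≤ (m : ℝ) * frobNorm A := mul_nonneg m.cast_nonneg (Real.sqrt_nonneg _)
  have hneg : m * trace (Wᵀ * ojaField A l W) < 0 :=
    (mul_trace_transpose_mul_ojaField_le A hl W).trans_lt
      (mul_neg_of_pos_of_neg (by linarith) (by linarith))
  exact hinner ▸ neg_of_mul_neg_right hneg m.cast_nonneg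

lemma contDiff_ojaVectorField (A : Matrix (Fin d) (Fin d) ℝ) (l : ℝ) {k : WithTop ℕ∞} :
    ContDiff ℝ k (ojaVectorField (m := m) A l) := by
  refine contDiff_euclidean.2 fun p => ?_
  simp only [ojaVectorField, ojaField, flatten, unflatten, smul_of, Matrix.sub_apply,
    Matrix.smul_apply, Matrix.mul_apply, of_apply, transpose_apply, smul_eq_mul, Pi.smul_apply]
  fun_prop

end Oja

theorem regularized_oja_flow_global_solution_bounded_general
    (d m : ℕ) (A : Matrix (Fin d) (Fin d) ℝ)
    (l : ℝ) (hl : 0 ≤ l) (W0 : Matrix (Fin d) (Fin m) ℝ) :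
    ∃ W : ℝ → Matrix (Fin d) (Fin m) ℝ,
      (W 0 = W0 ∧ ∀ t ∈ Ici (0:ℝ), ∀ i j,
        HasDerivWithinAt (fun s => W s i j)
          (((2:ℝ) • ((A - W t * (W t)ᵀ) * W t) - (2 * l) • W t) i j) (Ici 0) t) ∧
      (∀ V : ℝ → Matrix (Fin d) (Fin m) ℝ,
        (V 0 = W0 ∧ ∀ t ∈ Ici (0:ℝ), ∀ i j,
          HasDerivWithinAt (fun s => V s i j)
            (((2:ℝ) • ((A - V t * (V t)ᵀ) * V t) - (2 * l) • V t) i j) (Ici 0) t) →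
        ∀ t ∈ Ici (0:ℝ), V t = W t) ∧
      (∃ Cb : ℝ, ∀ t ∈ Ici (0:ℝ), frobNorm (W t) ≤ Cb) := by
  have hF : LocallyLipschitz (ojaVectorField (m := m) A l) :=
    (contDiff_ojaVectorField A l (k := 1)).locallyLipschitz
  obtain ⟨γ, hγ0, hγ, hγb⟩ := exists_hasDerivWithinAt_Ici_norm_le_of_inner_neg hF
    (fun _ => inner_ojaVectorField_neg A hl) (flatten W0)
  refine ⟨fun t => unflatten (γ t), ⟨congrArg unflatten hγ0, fun t ht =>
      hasDerivWithinAt_flatten_iff (V := fun s => unflatten (γ s)) |>.1 (hγ t ht)⟩,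
    fun V ⟨hV0, hV⟩ t ht => ?_, ⟨_, fun t ht => (norm_flatten _).ge.trans (hγb t ht)⟩⟩
  have hVγ := eqOn_Ici_of_hasDerivWithinAt hF (γ := fun s => flatten (V s))
    (fun s hs => hasDerivWithinAt_flatten_iff.2 (hV s hs)) hγ (by rw [hV0, hγ0]) ht
  exact congrArg unflatten hVγ

/-- **Global well-posedness and boundedness of the regularized Oja flow.** Let `A` be a
real symmetric `d × d` matrix, `l ≥ 0`, `m ≤ d` and `W0 ∈ ℝ^{d×m}`. Then the ODE
`Ẇ = 2(A - WWᵀ)W - 2lW`, `W(0) = W0`, has a unique solution defined for all `t ≥ 0`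
(derivatives understood entrywise, within `[0, ∞)`), and the trajectory is bounded in
Frobenius norm. -/
theorem regularized_oja_flow_global_solution_bounded
    (d m : ℕ) (hm : m ≤ d) (A : Matrix (Fin d) (Fin d) ℝ) (hA : A.IsSymm)
    (l : ℝ) (hl : 0 ≤ l) (W0 : Matrix (Fin d) (Fin m) ℝ) :
    ∃ W : ℝ → Matrix (Fin d) (Fin m) ℝ,
      (W 0 = W0 ∧ ∀ t ∈ Ici (0:ℝ), ∀ i j,
        HasDerivWithinAt (fun s => W s i j)
          (((2:ℝ) • ((A - W t * (W t)ᵀ) * W t) - (2 * l) • W t) i j) (Ici 0) t) ∧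
      (∀ V : ℝ → Matrix (Fin d) (Fin m) ℝ,
        (V 0 = W0 ∧ ∀ t ∈ Ici (0:ℝ), ∀ i j,
          HasDerivWithinAt (fun s => V s i j)
            (((2:ℝ) • ((A - V t * (V t)ᵀ) * V t) - (2 * l) • V t) i j) (Ici 0) t) →
        ∀ t ∈ Ici (0:ℝ), V t = W t) ∧
      (∃ Cb : ℝ, ∀ t ∈ Ici (0:ℝ), frobNorm (W t) ≤ Cb) :=
  regularized_oja_flow_global_solution_bounded_general d m A l hl W0
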